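/- On the unit disk, the function φ(z) = 1 − (1−|z|²)/4 + (|z|⁴ − 4|z|² + 3)/64 approximates the solution I₀(|z|)/I₀(1) of the Helmholtz Dirichlet problem with error at most 0.0071 in sup norm; in particular |I₀(x)/I₀(1) − (1 − (1−x²)/4 + (x⁴ − 4x² + 3)/64)| ≤ 0.0071 for all x ∈ [0,1]. -/

import Mathlib

/-!
Both `I₀(x)` and `I₀(1)` are pinned down by partial sums of the power series: all terms are
nonnegative, and for `|x| ≤ 1` the terms past index `N` decay at least geometrically with ratio
`1/4`, so the tail is at most `4/3` times its first term. With four terms for `I₀(x)` and five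
for `I₀(1)`, the claim becomes a pair of polynomial inequalities in `x²` on `[0, 1]`.
-/

/-- The modified Bessel function of the first kind of order zero. -/
noncomputable def besselI0 (x : ℝ) : ℝ := ∑' k : ℕ, (x / 2) ^ (2 * k) / ((Nat.factorial k : ℝ)) ^ 2

open Finset

noncomputable def besselI0Term (x : ℝ) (k : ℕ) : ℝ := (x / 2) ^ (2 * k) / (k.factorial : ℝ) ^ 2

lemma besselI0_eq_tsum (x : ℝ) : besselI0 x = ∑' k, besselI0Term x k := rfl

lemma besselI0Term_eq (x : ℝ) (k : ℕ) :
    besselI0Term x k = (x ^ 2 / 4) ^ k / (k.factorial : ℝ) ^ 2 := by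
  rw [besselI0Term, pow_mul, div_pow]
  norm_num

lemma besselI0Term_nonneg (x : ℝ) (k : ℕ) : 0 ≤ besselI0Term x k := by
  rw [besselI0Term_eq]
  positivity

lemma summable_besselI0Term (x : ℝ) : Summable (besselI0Term x) := by
  refine .of_nonneg_of_le (besselI0Term_nonneg x) (fun k => ?_)
    (Real.summable_pow_div_factorial (x ^ 2 / 4))
  rw [besselI0Term_eq]
  have hfac : (1 : ℝ) ≤ k.factorial := by exact_mod_cast k.factorial_pos
  exact div_le_div_of_nonneg_left (by positivity) (by positivity) (by nlinarith)

lemma besselI0Term_add_le {x : ℝ} (hx : |x| ≤ 1) (k N : ℕ) :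
    besselI0Term x (k + N) ≤ besselI0Term x N * (1 / 4) ^ k := by
  have hq : x ^ 2 / 4 ≤ 1 / 4 := by
    have := (sq_le_one_iff_abs_le_one x).2 hx
    linarith
  have hfac : (N.factorial : ℝ) ≤ (k + N).factorial := by
    exact_mod_cast Nat.factorial_le (Nat.le_add_left N k)
  simp only [besselI0Term_eq, pow_add]
  calc (x ^ 2 / 4) ^ k * (x ^ 2 / 4) ^ N / ((k + N).factorial : ℝ) ^ 2
      ≤ (1 / 4) ^ k * (x ^ 2 / 4) ^ N / (N.factorial : ℝ) ^ 2 := by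
        gcongr
    _ = (x ^ 2 / 4) ^ N / (N.factorial : ℝ) ^ 2 * (1 / 4) ^ k := by ring

lemma sum_range_besselI0Term_le (x : ℝ) (N : ℕ) :
    ∑ k ∈ range N, besselI0Term x k ≤ besselI0 x :=
  (summable_besselI0Term x).sum_le_tsum _ (fun k _ => besselI0Term_nonneg x k)

lemma besselI0_le_sum_range_add {x : ℝ} (hx : |x| ≤ 1) (N : ℕ) :
    besselI0 x ≤ ∑ k ∈ range N, besselI0Term x k + besselI0Term x N * (4 / 3) := by
  have hgeom : Summable fun k : ℕ => besselI0Term x N * (1 / 4 : ℝ) ^ k :=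
    (summable_geometric_of_lt_one (by norm_num) (by norm_num)).mul_left _
  have htail : ∑' k, besselI0Term x (k + N) ≤ besselI0Term x N * (4 / 3) :=
    calc ∑' k, besselI0Term x (k + N)
        ≤ ∑' k : ℕ, besselI0Term x N * (1 / 4 : ℝ) ^ k :=
          ((summable_nat_add_iff N).2 (summable_besselI0Term x)).tsum_le_tsum
            (besselI0Term_add_le hx · N) hgeom
      _ = besselI0Term x N * (4 / 3) := by
          rw [tsum_mul_left, tsum_geometric_of_lt_one (by norm_num) (by norm_num)]
          norm_num
  rw [besselI0_eq_tsum, ← (summable_besselI0Term x).sum_add_tsum_nat_add N]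
  linarith

lemma besselI0_mem_Icc {x : ℝ} (hx : |x| ≤ 1) :
    besselI0 x ∈ Set.Icc (1 + x ^ 2 / 4 + x ^ 4 / 64 + x ^ 6 / 2304)
      (1 + x ^ 2 / 4 + x ^ 4 / 64 + x ^ 6 / 2304 + x ^ 8 / 110592) := by
  have hsum : ∑ k ∈ range 4, besselI0Term x k = 1 + x ^ 2 / 4 + x ^ 4 / 64 + x ^ 6 / 2304 := by
    simp only [sum_range_succ, sum_range_zero, besselI0Term_eq, Nat.factorial]
    ring
  have hterm : besselI0Term x 4 * (4 / 3) = x ^ 8 / 110592 := by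
    rw [besselI0Term_eq, Nat.factorial]
    norm_num
    ring
  refine ⟨hsum ▸ sum_range_besselI0Term_le x 4, ?_⟩
  simpa only [hsum, hterm] using besselI0_le_sum_range_add hx 4

lemma besselI0_one_mem_Icc :
    besselI0 1 ∈ Set.Icc (186689 / 147456) (186689 / 147456 + 1 / 11059200) := by
  have hsum : ∑ k ∈ range 5, besselI0Term 1 k = 186689 / 147456 := by
    simp only [sum_range_succ, sum_range_zero, besselI0Term_eq, Nat.factorial]
    norm_num
  have hterm : besselI0Term 1 5 * (4 / 3) = 1 / 11059200 := by
    rw [besselI0Term_eq, Nat.factorial]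
    norm_num
  refine ⟨hsum ▸ sum_range_besselI0Term_le 1 5, ?_⟩
  simpa only [hsum, hterm] using besselI0_le_sum_range_add (x := 1) (by norm_num) 5

lemma abs_div_sub_le_of_mem_Icc {F A P ε b b' a a' : ℝ} (ha : 0 < a) (hP : 0 ≤ P) (hε : 0 ≤ ε)
    (hF : F ∈ Set.Icc b b') (hA : A ∈ Set.Icc a a')
    (hupper : b' ≤ a * (P + ε)) (hlower : a' * P ≤ b + a * ε) :
    |F / A - P| ≤ ε := by
  obtain ⟨hA_lo, hA_hi⟩ := hA
  have hA_pos : 0 < A := ha.trans_le hA_lo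
  have hAP_lo : a * P ≤ A * P := mul_le_mul_of_nonneg_right hA_lo hP
  have hAP_hi : A * P ≤ a' * P := mul_le_mul_of_nonneg_right hA_hi hP
  have hεA : a * ε ≤ A * ε := mul_le_mul_of_nonneg_right hA_lo hε
  rw [show F / A - P = (F - A * P) / A by field_simp, abs_div, abs_of_pos hA_pos,
    div_le_iff₀ hA_pos, abs_le]
  constructor <;> linarith [hF.1, hF.2]

noncomputable def secondOrderApprox (x : ℝ) : ℝ :=
  1 - (1 - x ^ 2) / 4 + (x ^ 4 - 4 * x ^ 2 + 3) / 64

lemma secondOrderApprox_nonneg (x : ℝ) : 0 ≤ secondOrderApprox x := by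
  unfold secondOrderApprox
  nlinarith [sq_nonneg x, sq_nonneg (x ^ 2)]

lemma le_secondOrderApprox_add {x : ℝ} (hx : x ^ 2 ≤ 1) :
    1 + x ^ 2 / 4 + x ^ 4 / 64 + x ^ 6 / 2304 + x ^ 8 / 110592 ≤
      186689 / 147456 * (secondOrderApprox x + 0.0071) := by
  have h0 := sq_nonneg x
  have h1 := sub_nonneg.2 hx
  unfold secondOrderApprox
  nlinarith [mul_nonneg h0 h1, mul_nonneg (mul_nonneg h0 h0) h1,
    mul_nonneg (mul_nonneg (mul_nonneg h0 h0) h0) h1, sq_nonneg (x ^ 2), sq_nonneg (1 - x ^ 2)]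

lemma secondOrderApprox_le_add {x : ℝ} (hx : x ^ 2 ≤ 1) :
    (186689 / 147456 + 1 / 11059200) * secondOrderApprox x ≤
      1 + x ^ 2 / 4 + x ^ 4 / 64 + x ^ 6 / 2304 + 186689 / 147456 * 0.0071 := by
  have h0 := sq_nonneg x
  have h1 := sub_nonneg.2 hx
  unfold secondOrderApprox
  nlinarith [mul_nonneg h0 h1, mul_nonneg (mul_nonneg h0 h0) h1, sq_nonneg (x ^ 2),
    sq_nonneg (1 - x ^ 2)]

/-- For x ∈ [0,1],
|I₀(x)/I₀(1) − (1 − (1−x²)/4 + (x⁴ − 4x² + 3)/64)| ≤ 0.0071. -/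
theorem second_order_error_bound (x : ℝ) (hx : x ∈ Set.Icc (0 : ℝ) 1) :
    |besselI0 x / besselI0 1 - (1 - (1 - x ^ 2) / 4 + (x ^ 4 - 4 * x ^ 2 + 3) / 64)| ≤ 0.0071 := by
  have hx_abs : |x| ≤ 1 := abs_le.2 ⟨by linarith [hx.1], hx.2⟩
  have hx_sq : x ^ 2 ≤ 1 := (sq_le_one_iff_abs_le_one x).2 hx_abs
  exact abs_div_sub_le_of_mem_Icc (by norm_num) (secondOrderApprox_nonneg x) (by norm_num)
    (besselI0_mem_Icc hx_abs) besselI0_one_mem_Icc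
    (le_secondOrderApprox_add hx_sq) (secondOrderApprox_le_add hx_sq)
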